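/- For every LTL formula φ in negation normal form and every trace ξ: ξ ⊨ φ if and only if there exists an element α ∧ Xψ ∈ NF(φ) such that ξ ⊨ α and ξ_1 ⊨ ψ (i.e., the normal form expansion is semantics-preserving: φ is equivalent to the disjunction of its normal form elements). -/
import Mathlib


/-- Literals: atomic propositions (over a countable set, here ℕ), their negations,
    plus the constants tt and ff (which may appear as elements of obligation sets). -/
inductive Lit where
  | pos : ℕ → Lit
  | neg : ℕ → Lit
  | tt : Lit
  | ff : Lit
deriving DecidableEq, Repr

/-- LTL formulas in negation normal form: tt | ff | l | φ∧φ | φ∨φ | Xφ | φUφ | φRφ.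
    (tt and ff enter via the `lit` constructor.) -/
inductive LTL where
  | lit : Lit → LTL
  | and : LTL → LTL → LTL
  | or : LTL → LTL → LTL
  | next : LTL → LTL
  | until : LTL → LTL → LTL
  | release : LTL → LTL → LTL
deriving DecidableEq, Repr

/-- F φ = tt U φ -/
def Fltl (φ : LTL) : LTL := .until (.lit .tt) φ
/-- G φ = ff R φ -/
def Gltl (φ : LTL) : LTL := .release (.lit .ff) φ

/-- A consistent set of literals: contains neither ff nor an atom together with its negation. -/
def ConsistentSet (ω : Set Lit) : Prop :=
  Lit.ff ∉ ω ∧ ∀ n : ℕ, ¬(Lit.pos n ∈ ω ∧ Lit.neg n ∈ ω)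

/-- A (consistent) set ω satisfies a literal: tt always, ff never, otherwise membership. -/
def LitSat (ω : Set Lit) : Lit → Prop
  | .tt => True
  | .ff => False
  | l => l ∈ ω

/-- Satisfaction of a propositional formula by a set of literals. -/
def PropSat (ω : Set Lit) : LTL → Prop
  | .lit l => LitSat ω l
  | .and a b => PropSat ω a ∧ PropSat ω b
  | .or a b => PropSat ω a ∨ PropSat ω b
  | _ => False

/-- The suffix ξ_k of an infinite word. -/
def shft (ξ : ℕ → Set Lit) (k : ℕ) : ℕ → Set Lit := fun n => ξ (n + k)

/-- LTL satisfaction over infinite sequences of literal sets. -/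
def Sat : (ℕ → Set Lit) → LTL → Prop
  | ξ, .lit l => LitSat (ξ 0) l
  | ξ, .and a b => Sat ξ a ∧ Sat ξ b
  | ξ, .or a b => Sat ξ a ∨ Sat ξ b
  | ξ, .next a => Sat (shft ξ 1) a
  | ξ, .until a b => ∃ i, Sat (shft ξ i) b ∧ ∀ j < i, Sat (shft ξ j) a
  | ξ, .release a b =>
      (∀ i, Sat (shft ξ i) b) ∨
      ∃ i, Sat (shft ξ i) a ∧ Sat (shft ξ i) b ∧ ∀ j < i, Sat (shft ξ j) b

/-- A trace is an infinite sequence of consistent literal sets. -/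
def IsTrace (ξ : ℕ → Set Lit) : Prop := ∀ i, ConsistentSet (ξ i)

/-- An LTL formula is satisfiable iff some trace satisfies it. -/
def Satisfiable (φ : LTL) : Prop := ∃ ξ, IsTrace ξ ∧ Sat ξ φ

/-- Propositional formulas: built only from literals (incl. tt, ff) with ∧ and ∨. -/
def isPropB : LTL → Bool
  | .lit _ => true
  | .and a b => isPropB a && isPropB b
  | .or a b => isPropB a && isPropB b
  | _ => false

/-- DF(φ): the set of disjuncts of φ. -/
def DF : LTL → Finset LTL
  | .or a b => DF a ∪ DF b
  | φ => {φ}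

/-- Combination of two normal-form sets as in the ∧ rule:
    {(α₁∧α₂) ∧ X(ψ₁∧ψ₂) : αᵢ ∧ Xψᵢ in the respective sets}. -/
def comb (s t : Finset LTL) : Finset LTL :=
  (s ×ˢ t).image fun p =>
    match p with
    | (.and α₁ (.next ψ₁), .and α₂ (.next ψ₂)) =>
        .and (.and α₁ α₂) (.next (.and ψ₁ ψ₂))
    | (a, _) => a

/-- The normal form NF(φ): a finite set of formulas of shape α ∧ Xψ. -/
def NF : LTL → Finset LTL
  | .lit l => if l = Lit.ff then ∅ else {.and (.lit l) (.next (.lit .tt))}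
  | .and a b =>
      if isPropB (LTL.and a b) then {.and (.and a b) (.next (.lit .tt))}
      else comb (NF a) (NF b)
  | .or a b =>
      if isPropB (LTL.or a b) then {.and (.or a b) (.next (.lit .tt))}
      else NF a ∪ NF b
  | .next a => (DF a).image fun ψ => .and (.lit .tt) (.next ψ)
  | .until a b => NF b ∪ comb (NF a) {.and (.lit .tt) (.next (.until a b))}
  | .release a b =>
      (if isPropB (LTL.and a b) then {.and (.and a b) (.next (.lit .tt))}
       else comb (NF a) (NF b)) ∪
      comb (NF b) {.and (.lit .tt) (.next (.release a b))}

/-- Transition relation of T_φ: ψ₁ →^α ψ₂ iff α ∧ Xψ₂ ∈ NF(ψ₁). -/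
def TStep (ψ₁ α ψ₂ : LTL) : Prop := LTL.and α (.next ψ₂) ∈ NF ψ₁

/-- States of the transition system T_φ: formulas reachable from φ. -/
def States (φ : LTL) : Set LTL :=
  {ψ | Relation.ReflTransGen (fun a b => ∃ α, TStep a α b) φ ψ}

/-- A strongly connected component of T_φ: a set of states of T_φ such that every
    state is reachable from every state by a nonempty path staying in the set. -/
def IsSCC (φ : LTL) (scc : Set LTL) : Prop :=
  scc ⊆ States φ ∧
  ∀ a ∈ scc, ∀ b ∈ scc,
    Relation.TransGen (fun x y => x ∈ scc ∧ y ∈ scc ∧ ∃ α, TStep x α y) a b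

/-- The literals occurring in a (propositional) formula (tt and ff are not literals). -/
def lits : LTL → Finset Lit
  | .lit .tt => ∅
  | .lit .ff => ∅
  | .lit l => {l}
  | .and a b => lits a ∪ lits b
  | .or a b => lits a ∪ lits b
  | _ => ∅

/-- L(scc): all literals occurring in labels of transitions between states of scc. -/
def Lscc (scc : Set LTL) : Set Lit :=
  {l | ∃ a ∈ scc, ∃ b ∈ scc, ∃ α, TStep a α b ∧ l ∈ lits α}

/-! ### Auxiliary lemmas for the normal-form semantics theorem -/

lemma shft_zero (ξ : ℕ → Set Lit) : shft ξ 0 = ξ := rfl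

lemma shft_shft (ξ : ℕ → Set Lit) (k i : ℕ) : shft (shft ξ k) i = shft ξ (i + k) := by
  funext n; simp [shft, Nat.add_assoc]

lemma sat_tt (ξ : ℕ → Set Lit) : Sat ξ (.lit .tt) := by simp [Sat, LitSat]

/-- All elements of a set have the shape α ∧ Xψ. -/
def Shaped (s : Finset LTL) : Prop := ∀ χ ∈ s, ∃ α ψ, χ = LTL.and α (LTL.next ψ)

lemma shaped_singleton (β χ : LTL) : Shaped {LTL.and β (LTL.next χ)} := by
  intro x hx
  rw [Finset.mem_singleton] at hx
  exact ⟨β, χ, hx⟩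

lemma shaped_union {s t : Finset LTL} (hs : Shaped s) (ht : Shaped t) : Shaped (s ∪ t) := by
  intro x hx
  rcases Finset.mem_union.1 hx with h | h
  exacts [hs x h, ht x h]

lemma shaped_comb {s t : Finset LTL} (hs : Shaped s) (ht : Shaped t) : Shaped (comb s t) := by
  intro x hx
  simp only [comb, Finset.mem_image, Finset.mem_product] at hx
  obtain ⟨⟨p, q⟩, ⟨hp, hq⟩, heq⟩ := hx
  obtain ⟨α₁, ψ₁, rfl⟩ := hs _ hp
  obtain ⟨α₂, ψ₂, rfl⟩ := ht _ hq
  exact ⟨_, _, heq.symm⟩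

lemma mem_comb {s t : Finset LTL} (hs : Shaped s) (ht : Shaped t) (χ : LTL) :
    χ ∈ comb s t ↔ ∃ α₁ ψ₁ α₂ ψ₂, LTL.and α₁ (.next ψ₁) ∈ s ∧ LTL.and α₂ (.next ψ₂) ∈ t ∧
      χ = LTL.and (.and α₁ α₂) (.next (.and ψ₁ ψ₂)) := by
  constructor
  · intro hx
    simp only [comb, Finset.mem_image, Finset.mem_product] at hx
    obtain ⟨⟨p, q⟩, ⟨hp, hq⟩, heq⟩ := hx
    obtain ⟨α₁, ψ₁, rfl⟩ := hs _ hp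
    obtain ⟨α₂, ψ₂, rfl⟩ := ht _ hq
    exact ⟨α₁, ψ₁, α₂, ψ₂, hp, hq, heq.symm⟩
  · rintro ⟨α₁, ψ₁, α₂, ψ₂, h1, h2, rfl⟩
    simp only [comb, Finset.mem_image, Finset.mem_product]
    exact ⟨(LTL.and α₁ (.next ψ₁), LTL.and α₂ (.next ψ₂)), ⟨h1, h2⟩, rfl⟩

lemma shaped_NF : ∀ φ : LTL, Shaped (NF φ)
  | .lit l => by
    rw [NF]
    split
    · intro x hx; simp at hx
    · exact shaped_singleton _ _
  | .and a b => by
    rw [NF]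
    split
    · exact shaped_singleton _ _
    · exact shaped_comb (shaped_NF a) (shaped_NF b)
  | .or a b => by
    rw [NF]
    split
    · exact shaped_singleton _ _
    · exact shaped_union (shaped_NF a) (shaped_NF b)
  | .next a => by
    rw [NF]
    intro x hx
    simp only [Finset.mem_image] at hx
    obtain ⟨ψ, _, rfl⟩ := hx
    exact ⟨_, _, rfl⟩
  | .until a b =>
    shaped_union (shaped_NF b) (shaped_comb (shaped_NF a) (shaped_singleton _ _))
  | .release a b => by
    apply shaped_union _ (shaped_comb (shaped_NF b) (shaped_singleton _ _))
    split
    · exact shaped_singleton _ _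
    · exact shaped_comb (shaped_NF a) (shaped_NF b)

/-- The right-hand side predicate: some α ∧ Xψ in s is satisfied. -/
def NFSat (ξ : ℕ → Set Lit) (s : Finset LTL) : Prop :=
  ∃ α ψ : LTL, LTL.and α (.next ψ) ∈ s ∧ Sat ξ α ∧ Sat (shft ξ 1) ψ

lemma NFSat_empty (ξ : ℕ → Set Lit) : ¬ NFSat ξ ∅ := by
  rintro ⟨α, ψ, h, -⟩; simp at h

lemma NFSat_singleton (ξ : ℕ → Set Lit) (β χ : LTL) :
    NFSat ξ {LTL.and β (.next χ)} ↔ Sat ξ β ∧ Sat (shft ξ 1) χ := by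
  constructor
  · rintro ⟨α, ψ, h, h1, h2⟩
    rw [Finset.mem_singleton] at h
    obtain ⟨rfl, rfl⟩ : α = β ∧ ψ = χ := by
      injection h with h₁ h₂; injection h₂ with h₃; exact ⟨h₁, h₃⟩
    exact ⟨h1, h2⟩
  · rintro ⟨h1, h2⟩
    exact ⟨β, χ, Finset.mem_singleton_self _, h1, h2⟩

lemma NFSat_union (ξ : ℕ → Set Lit) (s t : Finset LTL) :
    NFSat ξ (s ∪ t) ↔ NFSat ξ s ∨ NFSat ξ t := by
  constructor
  · rintro ⟨α, ψ, h, h1, h2⟩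
    rcases Finset.mem_union.1 h with h | h
    exacts [Or.inl ⟨α, ψ, h, h1, h2⟩, Or.inr ⟨α, ψ, h, h1, h2⟩]
  · rintro (⟨α, ψ, h, h1, h2⟩ | ⟨α, ψ, h, h1, h2⟩)
    exacts [⟨α, ψ, Finset.mem_union_left _ h, h1, h2⟩,
      ⟨α, ψ, Finset.mem_union_right _ h, h1, h2⟩]

lemma NFSat_comb (ξ : ℕ → Set Lit) {s t : Finset LTL} (hs : Shaped s) (ht : Shaped t) :
    NFSat ξ (comb s t) ↔ NFSat ξ s ∧ NFSat ξ t := by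
  constructor
  · rintro ⟨α, ψ, h, h1, h2⟩
    rw [mem_comb hs ht] at h
    obtain ⟨α₁, ψ₁, α₂, ψ₂, hm1, hm2, heq⟩ := h
    obtain ⟨rfl, rfl⟩ : α = LTL.and α₁ α₂ ∧ ψ = LTL.and ψ₁ ψ₂ := by
      injection heq with e1 e2; injection e2 with e3; exact ⟨e1, e3⟩
    obtain ⟨ha1, ha2⟩ := h1
    obtain ⟨hp1, hp2⟩ := h2
    exact ⟨⟨α₁, ψ₁, hm1, ha1, hp1⟩, ⟨α₂, ψ₂, hm2, ha2, hp2⟩⟩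
  · rintro ⟨⟨α₁, ψ₁, hm1, ha1, hp1⟩, ⟨α₂, ψ₂, hm2, ha2, hp2⟩⟩
    exact ⟨LTL.and α₁ α₂, LTL.and ψ₁ ψ₂,
      (mem_comb hs ht _).2 ⟨α₁, ψ₁, α₂, ψ₂, hm1, hm2, rfl⟩, ⟨ha1, ha2⟩, ⟨hp1, hp2⟩⟩

lemma sat_DF : ∀ (φ : LTL) (ξ : ℕ → Set Lit), Sat ξ φ ↔ ∃ ψ ∈ DF φ, Sat ξ ψ
  | .or a b, ξ => by
    rw [DF]
    constructor
    · rintro (h | h)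
      · obtain ⟨ψ, hm, hs⟩ := (sat_DF a ξ).1 h
        exact ⟨ψ, Finset.mem_union_left _ hm, hs⟩
      · obtain ⟨ψ, hm, hs⟩ := (sat_DF b ξ).1 h
        exact ⟨ψ, Finset.mem_union_right _ hm, hs⟩
    · rintro ⟨ψ, hm, hs⟩
      rcases Finset.mem_union.1 hm with h | h
      · exact Or.inl ((sat_DF a ξ).2 ⟨ψ, h, hs⟩)
      · exact Or.inr ((sat_DF b ξ).2 ⟨ψ, h, hs⟩)
  | .lit l, ξ => by rw [show DF (.lit l) = {LTL.lit l} from rfl]; simp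
  | .and a b, ξ => by rw [show DF (.and a b) = {LTL.and a b} from rfl]; simp
  | .next a, ξ => by rw [show DF (.next a) = {LTL.next a} from rfl]; simp
  | .until a b, ξ => by rw [show DF (.until a b) = {LTL.until a b} from rfl]; simp
  | .release a b, ξ => by rw [show DF (.release a b) = {LTL.release a b} from rfl]; simp

lemma until_unfold (ξ : ℕ → Set Lit) (a b : LTL) :
    Sat ξ (.until a b) ↔ Sat ξ b ∨ (Sat ξ a ∧ Sat (shft ξ 1) (.until a b)) := by
  constructor
  · rintro ⟨i, hb, ha⟩
    cases i with
    | zero => exact Or.inl hb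
    | succ i =>
      refine Or.inr ⟨ha 0 (Nat.succ_pos _), ⟨i, ?_, ?_⟩⟩
      · rwa [shft_shft]
      · intro j hj; rw [shft_shft]; exact ha (j + 1) (Nat.succ_lt_succ hj)
  · rintro (h | ⟨ha, i, hb, hpre⟩)
    · exact ⟨0, h, fun j hj => absurd hj (Nat.not_lt_zero j)⟩
    · refine ⟨i + 1, by rwa [shft_shft] at hb, ?_⟩
      intro j hj
      cases j with
      | zero => exact ha
      | succ j =>
        have := hpre j (Nat.lt_of_succ_lt_succ hj)
        rwa [shft_shft] at this

lemma release_unfold (ξ : ℕ → Set Lit) (a b : LTL) :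
    Sat ξ (.release a b) ↔
      (Sat ξ a ∧ Sat ξ b) ∨ (Sat ξ b ∧ Sat (shft ξ 1) (.release a b)) := by
  constructor
  · rintro (hall | ⟨i, ha, hb, hpre⟩)
    · exact Or.inr ⟨hall 0, Or.inl fun i => by rw [shft_shft]; exact hall (i + 1)⟩
    · cases i with
      | zero => exact Or.inl ⟨ha, hb⟩
      | succ i =>
        refine Or.inr ⟨hpre 0 (Nat.succ_pos _), Or.inr ⟨i, ?_, ?_, ?_⟩⟩
        · rwa [shft_shft]
        · rwa [shft_shft]
        · intro j hj; rw [shft_shft]; exact hpre (j + 1) (Nat.succ_lt_succ hj)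
  · rintro (⟨ha, hb⟩ | ⟨hb, hall | ⟨i, ha, hb', hpre⟩⟩)
    · exact Or.inr ⟨0, ha, hb, fun j hj => absurd hj (Nat.not_lt_zero j)⟩
    · refine Or.inl fun i => ?_
      cases i with
      | zero => exact hb
      | succ i => have := hall i; rwa [shft_shft] at this
    · refine Or.inr ⟨i + 1, by rwa [shft_shft] at ha, by rwa [shft_shft] at hb', ?_⟩
      intro j hj
      cases j with
      | zero => exact hb
      | succ j =>
        have := hpre j (Nat.lt_of_succ_lt_succ hj)
        rwa [shft_shft] at this

lemma nf_sat : ∀ (φ : LTL) (ξ : ℕ → Set Lit), Sat ξ φ ↔ NFSat ξ (NF φ)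
  | .lit l, ξ => by
    rw [NF]
    split
    · subst l; simp [Sat, LitSat, NFSat_empty ξ, NFSat]
    · rw [NFSat_singleton]
      exact ⟨fun h => ⟨h, sat_tt _⟩, fun h => h.1⟩
  | .and a b, ξ => by
    rw [NF]
    split
    · rw [NFSat_singleton]
      exact ⟨fun h => ⟨h, sat_tt _⟩, fun h => h.1⟩
    · rw [NFSat_comb ξ (shaped_NF a) (shaped_NF b), ← nf_sat a ξ, ← nf_sat b ξ]
      rfl
  | .or a b, ξ => by
    rw [NF]
    split
    · rw [NFSat_singleton]
      exact ⟨fun h => ⟨h, sat_tt _⟩, fun h => h.1⟩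
    · rw [NFSat_union, ← nf_sat a ξ, ← nf_sat b ξ]
      rfl
  | .next a, ξ => by
    rw [NF]
    show Sat (shft ξ 1) a ↔ _
    rw [sat_DF a (shft ξ 1)]
    constructor
    · rintro ⟨ψ, hm, hs⟩
      exact ⟨.lit .tt, ψ, Finset.mem_image_of_mem _ hm, sat_tt _, hs⟩
    · rintro ⟨α, ψ, hm, -, hs⟩
      simp only [Finset.mem_image] at hm
      obtain ⟨χ, hχ, heq⟩ := hm
      injection heq with e1 e2
      injection e2 with e3
      subst e3
      exact ⟨χ, hχ, hs⟩
  | .until a b, ξ => by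
    rw [NF, NFSat_union, NFSat_comb ξ (shaped_NF a) (shaped_singleton _ _),
      NFSat_singleton, until_unfold, nf_sat a ξ, nf_sat b ξ]
    constructor
    · rintro (h | ⟨h1, h2⟩)
      exacts [Or.inl h, Or.inr ⟨h1, sat_tt _, h2⟩]
    · rintro (h | ⟨h1, -, h2⟩)
      exacts [Or.inl h, Or.inr ⟨h1, h2⟩]
  | .release a b, ξ => by
    rw [NF, NFSat_union, NFSat_comb ξ (shaped_NF b) (shaped_singleton _ _),
      NFSat_singleton, release_unfold, nf_sat b ξ]
    have hfirst : NFSat ξ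
        (if isPropB (LTL.and a b) then {LTL.and (.and a b) (.next (.lit .tt))}
         else comb (NF a) (NF b)) ↔ Sat ξ a ∧ NFSat ξ (NF b) := by
      split
      · rw [NFSat_singleton, ← nf_sat b ξ]
        exact ⟨fun h => h.1, fun h => ⟨h, sat_tt _⟩⟩
      · rw [NFSat_comb ξ (shaped_NF a) (shaped_NF b), ← nf_sat a ξ]
    rw [hfirst]
    constructor
    · rintro (h | ⟨h1, h2⟩)
      exacts [Or.inl h, Or.inr ⟨h1, sat_tt _, h2⟩]
    · rintro (h | ⟨h1, -, h2⟩)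
      exacts [Or.inl h, Or.inr ⟨h1, h2⟩]

/-- The normal form expansion is semantics-preserving: ξ ⊨ φ iff some α ∧ Xψ ∈ NF(φ)
    has ξ ⊨ α and ξ_1 ⊨ ψ. -/
theorem nf_semantics_preserving (φ : LTL) (ξ : ℕ → Set Lit) (hξ : IsTrace ξ) :
    Sat ξ φ ↔
      ∃ α ψ : LTL, LTL.and α (.next ψ) ∈ NF φ ∧ Sat ξ α ∧ Sat (shft ξ 1) ψ := by
  exact nf_sat φ ξ
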